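/- Let G be a graph on n vertices with independence number α ≥ 1. Then for all λ > 0, the independence polynomial satisfies P_G(λ) ≤ (1 + λn/α)^α. -/

import Mathlib

open Finset MeasureTheory Real
open scoped Classical

noncomputable def indSets {V : Type*} [Fintype V] (G : SimpleGraph V) : Finset (Finset V) :=
  Finset.univ.filter (fun s => ∀ u ∈ s, ∀ v ∈ s, ¬ G.Adj u v)

/-- The independence polynomial (hard-core partition function). -/
noncomputable def indPoly {V : Type*} [Fintype V] (G : SimpleGraph V) (x : ℝ) : ℝ :=
  ∑ s ∈ indSets G, x ^ s.card

/-- Expected size of an independent set from the hard-core model at fugacity x. -/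
noncomputable def avgSize {V : Type*} [Fintype V] (G : SimpleGraph V) (x : ℝ) : ℝ :=
  x * deriv (indPoly G) x / indPoly G x

/-!
Pass to the multivariate independence polynomial `Z(y) = ∑_I ∏_{i ∈ I} y i` with vertex weights
`y ≥ 0` and prove `Z(y) ≤ (1 + ∑ y / α)^α`. No independent set contains both ends of an edge `uv`,
so `Z` is affine in how the total `y u + y v` is split between `u` and `v`: moving all of it onto
one of the two endpoints does not decrease `Z`, keeps `∑ y`, and shrinks the support of `y`. Once
the support `S` is independent, `Z(y) = ∏_{i ∈ S} (1 + y i)`, which AM-GM bounds by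
`(1 + ∑ y / α)^α` because `#S ≤ α`. Constant weights `λ` give the theorem.
-/

theorem prod_one_add_le_one_add_sum_div_pow {ι : Type*} (s : Finset ι) {y : ι → ℝ}
    (hy : ∀ i ∈ s, 0 ≤ y i) {m : ℕ} (hm : #s ≤ m) :
    ∏ i ∈ s, (1 + y i) ≤ (1 + (∑ i ∈ s, y i) / m) ^ m := by
  rcases Nat.eq_zero_or_pos m with rfl | hm0
  · simp [card_eq_zero.mp (Nat.le_zero.mp hm)]
  have hm' : (0 : ℝ) < m := by exact_mod_cast hm0
  have hsm : (#s : ℝ) ≤ m := by exact_mod_cast hm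
  have hy1 : ∀ i ∈ s, 0 ≤ 1 + y i := fun i hi => by linarith [hy i hi]
  -- weighted AM-GM for the numbers `1 + y i`, `i ∈ s`, padded with `m - #s` ones
  have key := geom_mean_le_arith_mean_weighted s.insertNone
    (fun o => o.elim ((m - #s : ℝ) / m) fun _ => (m : ℝ)⁻¹)
    (fun o => o.elim 1 fun i => 1 + y i) ?_ ?_ ?_
  · simp only [prod_insertNone, sum_insertNone, Option.elim_none, Option.elim_some,
      one_rpow, one_mul] at key
    rw [finsetProd_rpow s _ hy1] at key
    calc ∏ i ∈ s, (1 + y i) = ((∏ i ∈ s, (1 + y i)) ^ (m⁻¹ : ℝ)) ^ m :=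
          (rpow_inv_natCast_pow (prod_nonneg hy1) hm0.ne').symm
      _ ≤ _ := by
        refine pow_le_pow_left₀ (rpow_nonneg (prod_nonneg hy1) _) (key.trans_eq ?_) m
        rw [← mul_sum, sum_add_distrib, sum_const, nsmul_eq_mul]
        field_simp
        ring
  · rintro (_ | i) -
    · exact div_nonneg (by linarith) hm'.le
    · exact inv_nonneg.2 hm'.le
  · simp only [sum_insertNone, Option.elim_none, Option.elim_some, sum_const, nsmul_eq_mul]
    field_simp
    ring
  · rintro (_ | i) hi
    · exact zero_le_one
    · exact hy1 i (some_mem_insertNone.1 hi)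

section moveWeight
variable {V : Type*}

noncomputable def moveWeight (y : V → ℝ) (u v : V) : V → ℝ :=
  Function.update (Function.update y u (y u + y v)) v 0

variable {y : V → ℝ} {u v : V} {I : Finset V}

theorem moveWeight_of_eq_zero (hv : y v = 0) : moveWeight y u v = y := by
  rw [moveWeight, hv, add_zero, Function.update_eq_self, ← hv, Function.update_eq_self]

theorem moveWeight_nonneg (hy : ∀ i, 0 ≤ y i) (i : V) : 0 ≤ moveWeight y u v i := by
  unfold moveWeight
  rcases eq_or_ne i v with rfl | hiv
  · simp
  rcases eq_or_ne i u with rfl | hiu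
  · simpa [hiv] using add_nonneg (hy i) (hy v)
  · simpa [hiv, hiu] using hy i

theorem moveWeight_eq_zero_of_notMem {s : Finset V} (hu : u ∈ s) (hy : ∀ i ∉ s, y i = 0)
    {i : V} (hi : i ∉ s.erase v) : moveWeight y u v i = 0 := by
  unfold moveWeight
  rcases eq_or_ne i v with rfl | hiv
  · simp
  have his : i ∉ s := fun h => hi (mem_erase.2 ⟨hiv, h⟩)
  have hiu : i ≠ u := fun h => his (h ▸ hu)
  simp [hiv, hiu, hy i his]

theorem sum_moveWeight [Fintype V] (huv : u ≠ v) : ∑ i, moveWeight y u v i = ∑ i, y i := by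
  have hu : u ∈ univ \ {v} := by simp [huv]
  rw [moveWeight, sum_update_of_mem (mem_univ v), sum_update_of_mem hu,
    ← add_sum_erase _ _ (mem_univ v), sdiff_singleton_eq_erase,
    ← add_sum_erase _ _ (mem_erase.2 ⟨huv, mem_univ u⟩), sdiff_singleton_eq_erase]
  ring

theorem prod_moveWeight_of_mem_of_notMem (hu : u ∈ I) (hv : v ∉ I) :
    ∏ i ∈ I, moveWeight y u v i = (y u + y v) * ∏ i ∈ I \ {u}, y i := by
  rw [moveWeight, prod_update_of_notMem hv, prod_update_of_mem hu]

theorem prod_moveWeight_of_mem (hv : v ∈ I) : ∏ i ∈ I, moveWeight y u v i = 0 := by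
  rw [moveWeight, prod_update_of_mem hv, zero_mul]

theorem prod_moveWeight_of_notMem (hu : u ∉ I) (hv : v ∉ I) :
    ∏ i ∈ I, moveWeight y u v i = ∏ i ∈ I, y i := by
  rw [moveWeight, prod_update_of_notMem hv, prod_update_of_notMem hu]

end moveWeight

section multiIndPoly
variable {V : Type*} [Fintype V] {G : SimpleGraph V}

theorem mem_indSets {s : Finset V} : s ∈ indSets G ↔ ∀ u ∈ s, ∀ v ∈ s, ¬ G.Adj u v := by
  simp [indSets]

theorem powerset_subset_indSets {s : Finset V} (hs : s ∈ indSets G) : s.powerset ⊆ indSets G :=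
  fun _ ht => mem_indSets.2 fun u hu v hv =>
    mem_indSets.1 hs u (mem_powerset.1 ht hu) v (mem_powerset.1 ht hv)

variable (G) in
noncomputable def multiIndPoly (y : V → ℝ) : ℝ :=
  ∑ I ∈ indSets G, ∏ i ∈ I, y i

variable (G) in
theorem indPoly_eq_multiIndPoly_const (x : ℝ) : indPoly G x = multiIndPoly G fun _ => x := by
  simp only [indPoly, multiIndPoly, prod_const]

theorem multiIndPoly_eq_prod_of_mem_indSets {s : Finset V} {y : V → ℝ} (hs : s ∈ indSets G)
    (hy : ∀ i ∉ s, y i = 0) : multiIndPoly G y = ∏ i ∈ s, (1 + y i) := by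
  rw [prod_one_add, multiIndPoly]
  refine (sum_subset (powerset_subset_indSets hs) fun I _ hIs => ?_).symm
  obtain ⟨i, hiI, his⟩ := not_subset.1 (mt mem_powerset.2 hIs)
  exact prod_eq_zero hiI (hy i his)

theorem mul_multiIndPoly_moveWeight_add_mul (y : V → ℝ) {u v : V} (huv : G.Adj u v) :
    y u * multiIndPoly G (moveWeight y u v) + y v * multiIndPoly G (moveWeight y v u) =
      (y u + y v) * multiIndPoly G y := by
  simp only [multiIndPoly, mul_sum, ← sum_add_distrib]
  refine sum_congr rfl fun I hI => ?_
  by_cases hu : u ∈ I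
  · have hv : v ∉ I := fun hv => mem_indSets.1 hI u hu v hv huv
    rw [prod_moveWeight_of_mem_of_notMem hu hv, prod_moveWeight_of_mem hu,
      prod_eq_mul_prod_sdiff_singleton_of_mem hu]
    ring
  by_cases hv : v ∈ I
  · rw [prod_moveWeight_of_mem hv, prod_moveWeight_of_mem_of_notMem hv hu,
      prod_eq_mul_prod_sdiff_singleton_of_mem hv]
    ring
  · rw [prod_moveWeight_of_notMem hu hv, prod_moveWeight_of_notMem hv hu]
    ring

theorem multiIndPoly_le_of_moveWeight_le {y : V → ℝ} {u v : V} (huv : G.Adj u v)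
    (hu : 0 ≤ y u) (hv : 0 ≤ y v) {B : ℝ} (h₁ : multiIndPoly G (moveWeight y u v) ≤ B)
    (h₂ : multiIndPoly G (moveWeight y v u) ≤ B) : multiIndPoly G y ≤ B := by
  rcases (add_nonneg hu hv).eq_or_lt with h0 | hpos
  · rwa [moveWeight_of_eq_zero (by linarith)] at h₁
  refine le_of_mul_le_mul_left ?_ hpos
  calc (y u + y v) * multiIndPoly G y
      = y u * multiIndPoly G (moveWeight y u v) + y v * multiIndPoly G (moveWeight y v u) :=
        (mul_multiIndPoly_moveWeight_add_mul y huv).symm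
    _ ≤ y u * B + y v * B := by gcongr
    _ = (y u + y v) * B := by ring

theorem multiIndPoly_le {α : ℕ} (hα : ∀ s ∈ indSets G, #s ≤ α) {y : V → ℝ}
    (hy : ∀ i, 0 ≤ y i) : multiIndPoly G y ≤ (1 + (∑ i, y i) / α) ^ α := by
  suffices key : ∀ s : Finset V, ∀ y : V → ℝ, (∀ i, 0 ≤ y i) → (∀ i ∉ s, y i = 0) →
      multiIndPoly G y ≤ (1 + (∑ i, y i) / α) ^ α from key univ y hy (by simp)
  intro s
  induction s using Finset.strongInduction with
  | H s ih =>
    intro y hy hys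
    by_cases hs : s ∈ indSets G
    · rw [multiIndPoly_eq_prod_of_mem_indSets hs hys,
        ← sum_subset (subset_univ s) fun i _ hi => hys i hi]
      exact prod_one_add_le_one_add_sum_div_pow s (fun i _ => hy i) (hα s hs)
    obtain ⟨u, hu, v, hv, huv⟩ : ∃ u ∈ s, ∃ v ∈ s, G.Adj u v := by simpa [mem_indSets] using hs
    refine multiIndPoly_le_of_moveWeight_le huv (hy u) (hy v) ?_ ?_
    · simpa only [sum_moveWeight huv.ne] using ih _ (erase_ssubset hv) _ (moveWeight_nonneg hy)
        fun _ => moveWeight_eq_zero_of_notMem hu hys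
    · simpa only [sum_moveWeight huv.ne.symm] using ih _ (erase_ssubset hu) _
        (moveWeight_nonneg hy) fun _ => moveWeight_eq_zero_of_notMem hv hys

end multiIndPoly

theorem stmt17_general {V : Type*} [Fintype V] (G : SimpleGraph V) (α : ℕ)
    (hα : α = (indSets G).sup Finset.card) (l : ℝ) (hl : 0 < l) :
    indPoly G l ≤ (1 + l * (Fintype.card V : ℝ) / (α : ℝ)) ^ α := by
  have h := multiIndPoly_le (fun s hs => hα ▸ le_sup hs) fun _ : V => hl.le
  rwa [sum_const, card_univ, nsmul_eq_mul, mul_comm, ← indPoly_eq_multiIndPoly_const] at h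

theorem stmt17 {V : Type*} [Fintype V] [Nonempty V] (G : SimpleGraph V) (α : ℕ)
    (hα : α = (indSets G).sup Finset.card) (hα1 : 1 ≤ α) (l : ℝ) (hl : 0 < l) :
    indPoly G l ≤ (1 + l * (Fintype.card V : ℝ) / (α : ℝ)) ^ α :=
  stmt17_general G α hα l hl
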